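/- arXiv:2102.03811 — 3 statements merged into one kernel-verified Lean document; each statement's English description precedes it below -/
import Mathlib

section
/- Let R be a ring and let D₂(R) be the ring of 2×2 upper triangular matrices over R with equal diagonal entries; D₂(R) is isomorphic to the trivial square-zero extension TrivSqZeroExt R R, whose elements are pairs (a, b) ∈ R × R with multiplication (a, b)·(a', b') = (a·a', a·b' + b·a'). If a ∈ R is quasinilpotent in R, then for every b ∈ R the element (a, b) of TrivSqZeroExt R R is quasinilpotent in TrivSqZeroExt R R. -/
/-- An element `a` of a ring is quasinilpotent if `1 + a * x` is a unit
for every `x` commuting with `a`. -/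
def IsQuasinilpotent {R : Type*} [Ring R] (a : R) : Prop :=
  ∀ x : R, a * x = x * a → IsUnit (1 + a * x)

theorem IsQuasinilpotent.of_map {F S R : Type*} [Ring S] [Ring R] [FunLike F S R]
    [RingHomClass F S R] (f : F) [IsLocalHom f] {s : S} (h : IsQuasinilpotent (f s)) :
    IsQuasinilpotent s := by
  intro x hx
  have hfx : f s * f x = f x * f s := by rw [← map_mul, hx, map_mul]
  apply IsUnit.of_map f
  simpa only [map_add, map_one, map_mul] using h (f x) hfx

namespace TrivSqZeroExt

instance isLocalHom_fstHom (S R M : Type*) [CommSemiring S] [Semiring R] [AddCommGroup M]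
    [Algebra S R] [Module S M] [Module R M] [Module Rᵐᵒᵖ M] [SMulCommClass R Rᵐᵒᵖ M]
    [IsScalarTower S R M] [IsScalarTower S Rᵐᵒᵖ M] : IsLocalHom (fstHom S R M) :=
  ⟨fun _ hx => isUnit_iff_isUnit_fst.mpr hx⟩

end TrivSqZeroExt

theorem stmt1 {R : Type*} [Ring R] (a : R) (ha : IsQuasinilpotent a) (b : R) :
    IsQuasinilpotent
      (TrivSqZeroExt.inl a + TrivSqZeroExt.inr b : TrivSqZeroExt R R) :=
  IsQuasinilpotent.of_map (TrivSqZeroExt.fstHom ℤ R R) (by simpa using ha)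
end

section
/- Every right qnil-duo ring is directly finite: if R is a right qnil-duo ring and a, b ∈ R satisfy a·b = 1, then b·a = 1. -/
/-- A ring is right qnil-duo if `R^qnil · a ⊆ a · R^qnil` for every `a`. -/
def IsRightQnilDuo (R : Type*) [Ring R] : Prop :=
  ∀ a b : R, IsQuasinilpotent b → ∃ c : R, IsQuasinilpotent c ∧ b * a = a * c

theorem IsNilpotent.isQuasinilpotent {R : Type*} [Ring R] {a : R} (ha : IsNilpotent a) :
    IsQuasinilpotent a :=
  fun _ hx => (Commute.isNilpotent_mul_right hx ha).isUnit_one_add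

section RightInverse

variable {R : Type*} [Ring R] {a b : R}

theorem mul_one_sub_mul_eq_zero_of_mul_eq_one (hab : a * b = 1) : a * (1 - b * a) = 0 := by
  rw [mul_sub, mul_one, ← mul_assoc, hab, one_mul, sub_self]

theorem isNilpotent_one_sub_mul_mul_of_mul_eq_one (hab : a * b = 1) :
    IsNilpotent ((1 - b * a) * a) :=
  ⟨2, by rw [pow_two, mul_assoc, ← mul_assoc a, mul_one_sub_mul_eq_zero_of_mul_eq_one hab,
    zero_mul, mul_zero]⟩

end RightInverse

theorem stmt12 {R : Type*} [Ring R] (h : IsRightQnilDuo R)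
    (a b : R) (hab : a * b = 1) : b * a = 1 := by
  set e := 1 - b * a with he
  have hae : a * e = 0 := mul_one_sub_mul_eq_zero_of_mul_eq_one hab
  obtain ⟨c, -, hc⟩ := h b (e * a) (isNilpotent_one_sub_mul_mul_of_mul_eq_one hab).isQuasinilpotent
  have heb : e = b * c := by rwa [mul_assoc, hab, mul_one] at hc
  have hc0 : c = 0 := by rwa [heb, ← mul_assoc, hab, one_mul] at hae
  rw [← sub_eq_zero, ← neg_sub, ← he, heb, hc0, mul_zero, neg_zero]
end

section
/- Let R be a local ring (a nontrivial ring in which for every a ∈ R either a or 1 − a is a unit) such that the product of any two quasinilpotent elements of R is zero (i.e., (R^qnil)² = 0). Then R is right qnil-duo and left qnil-duo. -/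
/-- A ring is left qnil-duo if `a · R^qnil ⊆ R^qnil · a` for every `a`. -/
def IsLeftQnilDuo (R : Type*) [Ring R] : Prop :=
  ∀ a b : R, IsQuasinilpotent b → ∃ c : R, IsQuasinilpotent c ∧ a * b = c * a

/-! If `a` is a unit, `b * a = a * (a⁻¹ * b * a)` and `a * b = (a * b * a⁻¹) * a`, and
quasinilpotence is invariant under conjugation. If `a` is not a unit, it is quasinilpotent
because `R` is local, so both sides vanish by `(R^qnil)² = 0` and `c = 0` works. The only
point needing care in a noncommutative local ring is that a right-invertible element is a
unit: for `a * v = 1`, the idempotent `v * a` is either `1` or `0`, and in the latter case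
`a = a * (v * a) = 0` forces `R` to be trivial. -/

section Quasinilpotent

variable {R : Type*} [Ring R]

theorem isQuasinilpotent_zero : IsQuasinilpotent (0 : R) := by
  simp [IsQuasinilpotent]

theorem IsQuasinilpotent.map_ringEquiv {S : Type*} [Ring S] (e : R ≃+* S) {a : R}
    (ha : IsQuasinilpotent a) : IsQuasinilpotent (e a) := by
  intro y hy
  obtain ⟨x, rfl⟩ := e.surjective y
  have hx : a * x = x * a := e.injective (by simpa only [map_mul] using hy)
  simpa only [map_add, map_one, map_mul] using (ha x hx).map e

theorem IsQuasinilpotent.units_conj (u : Rˣ) {b : R} (hb : IsQuasinilpotent b) :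
    IsQuasinilpotent (u * b * ↑u⁻¹) := by
  simpa [ConjAct.units_smul_def] using
    hb.map_ringEquiv (MulSemiringAction.toRingEquiv (ConjAct Rˣ) R (ConjAct.toConjAct u))

theorem isDedekindFiniteMonoid_of_isUnit_or_isUnit_one_sub
    (hlocal : ∀ a : R, IsUnit a ∨ IsUnit (1 - a)) : IsDedekindFiniteMonoid R where
  mul_eq_one_symm {a v} hav := by
    have hidem : IsIdempotentElem (v * a) := by
      rw [IsIdempotentElem, mul_assoc, ← mul_assoc a, hav, one_mul]
    rcases hlocal (v * a) with hunit | hunit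
    · exact (IsIdempotentElem.iff_eq_one_of_isUnit hunit).mp hidem
    · have hva : v * a = 0 := by
        simpa using (IsIdempotentElem.iff_eq_one_of_isUnit hunit).mp hidem.one_sub
      have ha : a = 0 := calc
        a = a * v * a := by rw [hav, one_mul]
        _ = 0 := by rw [mul_assoc, hva, mul_zero]
      have : Subsingleton R := subsingleton_of_zero_eq_one (by rw [← hav, ha, zero_mul])
      exact Subsingleton.elim _ _

theorem isQuasinilpotent_of_not_isUnit (hlocal : ∀ a : R, IsUnit a ∨ IsUnit (1 - a)) {a : R}
    (ha : ¬IsUnit a) : IsQuasinilpotent a := by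
  have := isDedekindFiniteMonoid_of_isUnit_or_isUnit_one_sub hlocal
  intro x _
  rcases hlocal (-(a * x)) with hunit | hunit
  · exact absurd (isUnit_of_mul_isUnit_left ((IsUnit.neg_iff _).mp hunit)) ha
  · rwa [sub_neg_eq_add] at hunit

end Quasinilpotent

theorem stmt14_general {R : Type*} [Ring R]
    (hlocal : ∀ a : R, IsUnit a ∨ IsUnit (1 - a))
    (hsq : ∀ a b : R, IsQuasinilpotent a → IsQuasinilpotent b → a * b = 0) :
    IsRightQnilDuo R ∧ IsLeftQnilDuo R := by
  constructor
  · intro a b hb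
    by_cases ha : IsUnit a
    · obtain ⟨u, rfl⟩ := ha
      refine ⟨↑u⁻¹ * b * ↑u⁻¹⁻¹, hb.units_conj u⁻¹, ?_⟩
      simp [← mul_assoc]
    · have hba := hsq b a hb (isQuasinilpotent_of_not_isUnit hlocal ha)
      exact ⟨0, isQuasinilpotent_zero, by rw [hba, mul_zero]⟩
  · intro a b hb
    by_cases ha : IsUnit a
    · obtain ⟨u, rfl⟩ := ha
      exact ⟨u * b * ↑u⁻¹, hb.units_conj u, by simp [mul_assoc]⟩
    · have hab := hsq a b (isQuasinilpotent_of_not_isUnit hlocal ha) hb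
      exact ⟨0, isQuasinilpotent_zero, by rw [hab, zero_mul]⟩

theorem stmt14 {R : Type*} [Ring R] [Nontrivial R]
    (hlocal : ∀ a : R, IsUnit a ∨ IsUnit (1 - a))
    (hsq : ∀ a b : R, IsQuasinilpotent a → IsQuasinilpotent b → a * b = 0) :
    IsRightQnilDuo R ∧ IsLeftQnilDuo R :=
  stmt14_general hlocal hsq
end
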